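/- For any two-qubit symmetric pure state input |ψ⟩^{⊗2}, the single-qubit output of the six-state measure-and-prepare scheme, σ = (1/6) Σ_α Tr(|α⟩⟨α|^{⊗2} |ψ⟩⟨ψ|^{⊗2}) · 3|α⟩⟨α| (with the factor d_2^+ = 3), equals (1/2)|ψ⟩⟨ψ| + (1/4)I_2, hence has fidelity ⟨ψ|σ|ψ⟩ = 3/4. -/
import Mathlib


open scoped BigOperators

/-- `M`-fold tensor power `|φ⟩^{⊗M}` of a vector `φ ∈ ℂ^d`, as a vector on the
computational product basis `Fin M → Fin d`. -/
noncomputable def vecPow {d : ℕ} (M : ℕ) (φ : Fin d → ℂ) : (Fin M → Fin d) → ℂ :=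
  fun f => ∏ i, φ (f i)

/-- Rank-one operator `|v⟩⟨v|`. -/
noncomputable def projOp {n : Type*} [Fintype n] (v : n → ℂ) : Matrix n n ℂ :=
  Matrix.of fun i j => v i * star (v j)

/-- The orthogonal projector `P_+^M` onto the symmetric subspace of `(ℂ^d)^{⊗M}`. -/
noncomputable def symProj (d M : ℕ) : Matrix (Fin M → Fin d) (Fin M → Fin d) ℂ :=
  Matrix.of fun f g =>
    (∑ σ : Equiv.Perm (Fin M), if f = g ∘ σ then (1 : ℂ) else 0) / (Nat.factorial M : ℂ)

/-- `d_M^+ = C(M+d-1, M)`, the dimension of the symmetric subspace. -/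
def dPlus (d M : ℕ) : ℕ := (M + d - 1).choose M

/-- The six single-qubit Pauli eigenstates
`|0⟩, |1⟩, |±⟩ = (|0⟩±|1⟩)/√2, |±̃⟩ = (|0⟩±i|1⟩)/√2`. -/
noncomputable def sixStates : Fin 6 → Fin 2 → ℂ :=
  ![![1, 0],
    ![0, 1],
    ![(((Real.sqrt 2)⁻¹ : ℝ) : ℂ), (((Real.sqrt 2)⁻¹ : ℝ) : ℂ)],
    ![(((Real.sqrt 2)⁻¹ : ℝ) : ℂ), -(((Real.sqrt 2)⁻¹ : ℝ) : ℂ)],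
    ![(((Real.sqrt 2)⁻¹ : ℝ) : ℂ), Complex.I * (((Real.sqrt 2)⁻¹ : ℝ) : ℂ)],
    ![(((Real.sqrt 2)⁻¹ : ℝ) : ℂ), -(Complex.I * (((Real.sqrt 2)⁻¹ : ℝ) : ℂ))]]

lemma inner_vecPow {d M : ℕ} (v w : Fin d → ℂ) :
    ∑ f : Fin M → Fin d, vecPow M v f * star (vecPow M w f)
      = (∑ j, v j * star (w j)) ^ M := by
  rw [show (∑ j, v j * star (w j)) ^ M = ∏ _i : Fin M, (∑ j, v j * star (w j)) by
    simp [Finset.prod_const]]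
  rw [Finset.prod_univ_sum, Fintype.piFinset_univ]
  simp only [vecPow, star_prod, ← Finset.prod_mul_distrib]

lemma trace_proj {n : Type*} [Fintype n] [DecidableEq n] (v w : n → ℂ) :
    Matrix.trace (projOp v * projOp w)
      = (∑ j, star (v j) * w j) * (∑ j, v j * star (w j)) := by
  rw [Finset.sum_mul_sum]
  simp only [Matrix.trace, Matrix.mul_apply, projOp, Matrix.diag, Matrix.of_apply]
  rw [Finset.sum_comm]
  congr 1; ext g; congr 1; ext f; ring

lemma trace_pow {d M : ℕ} (v w : Fin d → ℂ) :
    Matrix.trace (projOp (vecPow M v) * projOp (vecPow M w))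
      = star ((∑ j, v j * star (w j)) ^ M) * (∑ j, v j * star (w j)) ^ M := by
  rw [trace_proj, ← inner_vecPow]
  congr 1
  rw [star_sum]
  congr 1; ext f; simp [mul_comm]

/-- For any two-qubit symmetric input `|ψ⟩^{⊗2}`, the single-qubit output of
the six-state measure-and-prepare scheme,
`σ = (1/6) Σ_α Tr(|α⟩⟨α|^{⊗2}|ψ⟩⟨ψ|^{⊗2}) · 3 |α⟩⟨α|`, equals
`(1/2)|ψ⟩⟨ψ| + (1/4)I₂`, hence has fidelity `⟨ψ|σ|ψ⟩ = 3/4`. -/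
theorem six_states_measure_prepare (ψ : Fin 2 → ℂ)
    (hψ : ∑ j, ψ j * star (ψ j) = 1) :
    (Matrix.of fun a b : Fin 2 =>
        ∑ α : Fin 6, (6 : ℂ)⁻¹ *
          Matrix.trace (projOp (vecPow 2 (sixStates α)) * projOp (vecPow 2 ψ)) *
          3 * (sixStates α a * star (sixStates α b)))
      = (2 : ℂ)⁻¹ • projOp ψ + (4 : ℂ)⁻¹ • (1 : Matrix (Fin 2) (Fin 2) ℂ)
    ∧ ∑ a, ∑ b, star (ψ a) *
        (∑ α : Fin 6, (6 : ℂ)⁻¹ *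
          Matrix.trace (projOp (vecPow 2 (sixStates α)) * projOp (vecPow 2 ψ)) *
          3 * (sixStates α a * star (sixStates α b))) * ψ b
      = 3 / 4 := by
  have hψ' : ψ 0 * (starRingEnd ℂ) (ψ 0) + ψ 1 * (starRingEnd ℂ) (ψ 1) = 1 := by
    simpa [Fin.sum_univ_two] using hψ
  have hc : (((Real.sqrt 2)⁻¹ : ℝ) : ℂ) ^ 2 = 2⁻¹ := by
    have h : ((Real.sqrt 2)⁻¹ : ℝ) ^ 2 = 2⁻¹ := by
      rw [inv_pow, Real.sq_sqrt] <;> norm_num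
    calc (((Real.sqrt 2)⁻¹ : ℝ) : ℂ) ^ 2 = ((((Real.sqrt 2)⁻¹ : ℝ) ^ 2 : ℝ) : ℂ) := by
          push_cast; ring
      _ = 2⁻¹ := by rw [h]; norm_num
  have g0 : (∑ j, sixStates 0 j * star (ψ j)) = (starRingEnd ℂ) (ψ 0) := by
    rw [Fin.sum_univ_two, show sixStates 0 0 = (1:ℂ) from rfl,
      show sixStates 0 1 = (0:ℂ) from rfl]
    simp only [Complex.star_def]
    ring
  have g1 : (∑ j, sixStates 1 j * star (ψ j)) = (starRingEnd ℂ) (ψ 1) := by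
    rw [Fin.sum_univ_two, show sixStates 1 0 = (0:ℂ) from rfl,
      show sixStates 1 1 = (1:ℂ) from rfl]
    simp only [Complex.star_def]
    ring
  have g2 : (∑ j, sixStates 2 j * star (ψ j))
      = (((Real.sqrt 2)⁻¹ : ℝ) : ℂ) * ((starRingEnd ℂ) (ψ 0) + (starRingEnd ℂ) (ψ 1)) := by
    rw [Fin.sum_univ_two, show sixStates 2 0 = (((Real.sqrt 2)⁻¹ : ℝ) : ℂ) from rfl,
      show sixStates 2 1 = (((Real.sqrt 2)⁻¹ : ℝ) : ℂ) from rfl]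
    simp only [Complex.star_def]
    ring
  have g3 : (∑ j, sixStates 3 j * star (ψ j))
      = (((Real.sqrt 2)⁻¹ : ℝ) : ℂ) * ((starRingEnd ℂ) (ψ 0) - (starRingEnd ℂ) (ψ 1)) := by
    rw [Fin.sum_univ_two, show sixStates 3 0 = (((Real.sqrt 2)⁻¹ : ℝ) : ℂ) from rfl,
      show sixStates 3 1 = (-(((Real.sqrt 2)⁻¹ : ℝ) : ℂ)) from rfl]
    simp only [Complex.star_def]
    ring
  have g4 : (∑ j, sixStates 4 j * star (ψ j))
      = (((Real.sqrt 2)⁻¹ : ℝ) : ℂ) * ((starRingEnd ℂ) (ψ 0) + Complex.I * (starRingEnd ℂ) (ψ 1)) := by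
    rw [Fin.sum_univ_two, show sixStates 4 0 = (((Real.sqrt 2)⁻¹ : ℝ) : ℂ) from rfl,
      show sixStates 4 1 = (Complex.I * (((Real.sqrt 2)⁻¹ : ℝ) : ℂ)) from rfl]
    simp only [Complex.star_def]
    ring
  have g5 : (∑ j, sixStates 5 j * star (ψ j))
      = (((Real.sqrt 2)⁻¹ : ℝ) : ℂ) * ((starRingEnd ℂ) (ψ 0) - Complex.I * (starRingEnd ℂ) (ψ 1)) := by
    rw [Fin.sum_univ_two, show sixStates 5 0 = (((Real.sqrt 2)⁻¹ : ℝ) : ℂ) from rfl,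
      show sixStates 5 1 = (-(Complex.I * (((Real.sqrt 2)⁻¹ : ℝ) : ℂ))) from rfl]
    simp only [Complex.star_def]
    ring
  have main : (Matrix.of fun a b : Fin 2 =>
        ∑ α : Fin 6, (6 : ℂ)⁻¹ *
          Matrix.trace (projOp (vecPow 2 (sixStates α)) * projOp (vecPow 2 ψ)) *
          3 * (sixStates α a * star (sixStates α b)))
      = (2 : ℂ)⁻¹ • projOp ψ + (4 : ℂ)⁻¹ • (1 : Matrix (Fin 2) (Fin 2) ℂ) := by
    ext a b
    rw [Matrix.of_apply, Fin.sum_univ_six]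
    simp only [trace_pow, g0, g1, g2, g3, g4, g5]
    fin_cases a <;> fin_cases b <;>
      simp only [show sixStates 0 0 = (1:ℂ) from rfl,
        show sixStates 0 1 = (0:ℂ) from rfl,
        show sixStates 1 0 = (0:ℂ) from rfl,
        show sixStates 1 1 = (1:ℂ) from rfl,
        show sixStates 2 0 = (((Real.sqrt 2)⁻¹ : ℝ) : ℂ) from rfl,
        show sixStates 2 1 = (((Real.sqrt 2)⁻¹ : ℝ) : ℂ) from rfl,
        show sixStates 3 0 = (((Real.sqrt 2)⁻¹ : ℝ) : ℂ) from rfl,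
        show sixStates 3 1 = (-(((Real.sqrt 2)⁻¹ : ℝ) : ℂ)) from rfl,
        show sixStates 4 0 = (((Real.sqrt 2)⁻¹ : ℝ) : ℂ) from rfl,
        show sixStates 4 1 = (Complex.I * (((Real.sqrt 2)⁻¹ : ℝ) : ℂ)) from rfl,
        show sixStates 5 0 = (((Real.sqrt 2)⁻¹ : ℝ) : ℂ) from rfl,
        show sixStates 5 1 = (-(Complex.I * (((Real.sqrt 2)⁻¹ : ℝ) : ℂ))) from rfl,
        Matrix.add_apply, Matrix.smul_apply, projOp, Matrix.of_apply, Matrix.one_apply,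
        smul_eq_mul, star_pow, star_mul', star_add, star_sub, Complex.star_def,
        Complex.conj_conj, Complex.conj_ofReal, Complex.conj_I, map_add, map_sub, map_mul,
        map_inv₀, map_ofNat, map_neg, star_neg, map_one, map_zero, Complex.conj_conj, if_true, if_false, Fin.zero_eta, Fin.mk_one,
        one_ne_zero, zero_ne_one, reduceCtorEq, ite_true, ite_false, mul_one, mul_zero,
        zero_mul, one_mul, star_one, star_zero]
    · linear_combination ((1/4 : ℂ) + (1/4 : ℂ) * (ψ 1) * ((starRingEnd ℂ) (ψ 1)) + (3/4 : ℂ) * (ψ 0) * ((starRingEnd ℂ) (ψ 0))) * hψ' + ((-1/8 : ℂ) * (ψ 1)^2 * ((starRingEnd ℂ) (ψ 1))^2 + (1/8 : ℂ) * (ψ 1)^2 * ((starRingEnd ℂ) (ψ 1))^2 * (Complex.I)^2 + (1/8 : ℂ) * (ψ 1)^2 * ((starRingEnd ℂ) (ψ 0))^2 + (-1/2 : ℂ) * (ψ 0) * (ψ 1) * ((starRingEnd ℂ) (ψ 0)) * ((starRingEnd ℂ) (ψ 1)) + (1/8 : ℂ) * (ψ 0)^2 * ((starRingEnd ℂ)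 (ψ 1))^2) * Complex.I_sq + ((1/4 : ℂ) * (ψ 1)^2 * ((starRingEnd ℂ) (ψ 1))^2 + (1/2 : ℂ) * (ψ 1)^2 * ((starRingEnd ℂ) (ψ 1))^2 * ((((Real.sqrt 2)⁻¹ : ℝ) : ℂ))^2 + (1 : ℂ) * (ψ 1)^2 * ((starRingEnd ℂ) (ψ 1))^2 * ((((Real.sqrt 2)⁻¹ : ℝ) : ℂ))^4 + (1/4 : ℂ) * (ψ 1)^2 * ((starRingEnd ℂ) (ψ 1))^2 * (Complex.I)^4 + (1/2 : ℂ) * (ψ 1)^2 * ((starRingEnd ℂ) (ψ 1))^2 * (Complex.I)^4 * ((((Real.sqrt 2)⁻¹ : ℝ) : ℂ))^2 + (1 : ℂ) * (ψ 1)^2 * ((starRingEnd ℂ) (ψ 1))^2 * (Complex.I)^4 * ((((Real.sqrt 2)⁻¹ : ℝ) : ℂ))^4 + (1/4 : ℂ) * (ψ 1)^2 * ((starRingEnd ℂ) (ψ 0))^2 + (1/2 : ℂ) * (ψ 1)^2 * ((starRingEnd ℂ) (ψ 0))^2 * ((((Real.sqrt 2)⁻¹ : ℝ) : ℂ))^2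 + (1 : ℂ) * (ψ 1)^2 * ((starRingEnd ℂ) (ψ 0))^2 * ((((Real.sqrt 2)⁻¹ : ℝ) : ℂ))^4 + (1/4 : ℂ) * (ψ 1)^2 * ((starRingEnd ℂ) (ψ 0))^2 * (Complex.I)^2 + (1/2 : ℂ) * (ψ 1)^2 * ((starRingEnd ℂ) (ψ 0))^2 * (Complex.I)^2 * ((((Real.sqrt 2)⁻¹ : ℝ) : ℂ))^2 + (1 : ℂ) * (ψ 1)^2 * ((starRingEnd ℂ) (ψ 0))^2 * (Complex.I)^2 * ((((Real.sqrt 2)⁻¹ : ℝ) : ℂ))^4 + (1 : ℂ) * (ψ 0) * (ψ 1) * ((starRingEnd ℂ) (ψ 0)) * ((starRingEnd ℂ) (ψ 1)) + (2 : ℂ) * (ψ 0) * (ψ 1) * ((starRingEnd ℂ) (ψ 0)) * ((starRingEnd ℂ) (ψ 1)) * ((((Real.sqrt 2)⁻¹ : ℝ) : ℂ))^2 + (4 : ℂ) * (ψ 0) * (ψ 1) * ((starRingEnd ℂ) (ψ 0)) * ((starRingEnd ℂ) (ψ 1)) * ((((Real.sqrt 2)⁻¹ : ℝ) : ℂ))^4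 + (-1 : ℂ) * (ψ 0) * (ψ 1) * ((starRingEnd ℂ) (ψ 0)) * ((starRingEnd ℂ) (ψ 1)) * (Complex.I)^2 + (-2 : ℂ) * (ψ 0) * (ψ 1) * ((starRingEnd ℂ) (ψ 0)) * ((starRingEnd ℂ) (ψ 1)) * (Complex.I)^2 * ((((Real.sqrt 2)⁻¹ : ℝ) : ℂ))^2 + (-4 : ℂ) * (ψ 0) * (ψ 1) * ((starRingEnd ℂ) (ψ 0)) * ((starRingEnd ℂ) (ψ 1)) * (Complex.I)^2 * ((((Real.sqrt 2)⁻¹ : ℝ) : ℂ))^4 + (1/4 : ℂ) * (ψ 0)^2 * ((starRingEnd ℂ) (ψ 1))^2 + (1/2 : ℂ) * (ψ 0)^2 * ((starRingEnd ℂ) (ψ 1))^2 * ((((Real.sqrt 2)⁻¹ : ℝ) : ℂ))^2 + (1 : ℂ) * (ψ 0)^2 * ((starRingEnd ℂ) (ψ 1))^2 * ((((Real.sqrt 2)⁻¹ : ℝ) : ℂ))^4 + (1/4 : ℂ) * (ψ 0)^2 * ((starRingEnd ℂ) (ψ 1))^2 * (Complex.I)^2 + (1/2 : ℂ) * (ψ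 0)^2 * ((starRingEnd ℂ) (ψ 1))^2 * (Complex.I)^2 * ((((Real.sqrt 2)⁻¹ : ℝ) : ℂ))^2 + (1 : ℂ) * (ψ 0)^2 * ((starRingEnd ℂ) (ψ 1))^2 * (Complex.I)^2 * ((((Real.sqrt 2)⁻¹ : ℝ) : ℂ))^4 + (1/2 : ℂ) * (ψ 0)^2 * ((starRingEnd ℂ) (ψ 0))^2 + (1 : ℂ) * (ψ 0)^2 * ((starRingEnd ℂ) (ψ 0))^2 * ((((Real.sqrt 2)⁻¹ : ℝ) : ℂ))^2 + (2 : ℂ) * (ψ 0)^2 * ((starRingEnd ℂ) (ψ 0))^2 * ((((Real.sqrt 2)⁻¹ : ℝ) : ℂ))^4) * hc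
    · linear_combination ((1/2 : ℂ) * (ψ 0) * ((starRingEnd ℂ) (ψ 1))) * hψ' + ((1/4 : ℂ) * (ψ 1)^2 * ((starRingEnd ℂ) (ψ 0)) * ((starRingEnd ℂ) (ψ 1)) + (-1/4 : ℂ) * (ψ 1)^2 * ((starRingEnd ℂ) (ψ 0)) * ((starRingEnd ℂ) (ψ 1)) * (Complex.I)^2 + (-1/4 : ℂ) * (ψ 0) * (ψ 1) * ((starRingEnd ℂ) (ψ 1))^2 + (1/4 : ℂ) * (ψ 0) * (ψ 1) * ((starRingEnd ℂ) (ψ 1))^2 * (Complex.I)^2 + (1/4 : ℂ) * (ψ 0) * (ψ 1) * ((starRingEnd ℂ) (ψ 0))^2 + (-1/4 : ℂ) * (ψ 0)^2 * ((starRingEnd ℂ) (ψ 0)) * ((starRingEnd ℂ) (ψ 1))) * Complex.I_sq + ((1/2 : ℂ) * (ψ 1)^2 * ((starRingEnd ℂ) (ψ 0)) * ((starRingEnd ℂ) (ψ 1)) + (1 : ℂ) * (ψ 1)^2 * ((starRingEnd ℂ) (ψ 0)) * ((starRingEnd ℂ) (ψ 1)) * ((((Real.sqrt 2)⁻¹ :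 ℝ) : ℂ))^2 + (2 : ℂ) * (ψ 1)^2 * ((starRingEnd ℂ) (ψ 0)) * ((starRingEnd ℂ) (ψ 1)) * ((((Real.sqrt 2)⁻¹ : ℝ) : ℂ))^4 + (-1/2 : ℂ) * (ψ 1)^2 * ((starRingEnd ℂ) (ψ 0)) * ((starRingEnd ℂ) (ψ 1)) * (Complex.I)^4 + (-1 : ℂ) * (ψ 1)^2 * ((starRingEnd ℂ) (ψ 0)) * ((starRingEnd ℂ) (ψ 1)) * (Complex.I)^4 * ((((Real.sqrt 2)⁻¹ : ℝ) : ℂ))^2 + (-2 : ℂ) * (ψ 1)^2 * ((starRingEnd ℂ) (ψ 0)) * ((starRingEnd ℂ) (ψ 1)) * (Complex.I)^4 * ((((Real.sqrt 2)⁻¹ : ℝ) : ℂ))^4 + (1/2 : ℂ) * (ψ 0) * (ψ 1) * ((starRingEnd ℂ) (ψ 1))^2 + (1 : ℂ) * (ψ 0) * (ψ 1) * ((starRingEnd ℂ) (ψ 1))^2 * ((((Real.sqrt 2)⁻¹ : ℝ) : ℂ))^2 + (2 : ℂ) * (ψ 0) * (ψ 1) * ((starRingEnd ℂ) (ψ 1))^2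 * ((((Real.sqrt 2)⁻¹ : ℝ) : ℂ))^4 + (1/2 : ℂ) * (ψ 0) * (ψ 1) * ((starRingEnd ℂ) (ψ 1))^2 * (Complex.I)^4 + (1 : ℂ) * (ψ 0) * (ψ 1) * ((starRingEnd ℂ) (ψ 1))^2 * (Complex.I)^4 * ((((Real.sqrt 2)⁻¹ : ℝ) : ℂ))^2 + (2 : ℂ) * (ψ 0) * (ψ 1) * ((starRingEnd ℂ) (ψ 1))^2 * (Complex.I)^4 * ((((Real.sqrt 2)⁻¹ : ℝ) : ℂ))^4 + (1/2 : ℂ) * (ψ 0) * (ψ 1) * ((starRingEnd ℂ) (ψ 0))^2 + (1 : ℂ) * (ψ 0) * (ψ 1) * ((starRingEnd ℂ) (ψ 0))^2 * ((((Real.sqrt 2)⁻¹ : ℝ) : ℂ))^2 + (2 : ℂ) * (ψ 0) * (ψ 1) * ((starRingEnd ℂ) (ψ 0))^2 * ((((Real.sqrt 2)⁻¹ : ℝ) : ℂ))^4 + (1/2 : ℂ) * (ψ 0) * (ψ 1) * ((starRingEnd ℂ) (ψ 0))^2 * (Complex.I)^2 + (1 : ℂ) * (ψ 0) * (ψ 1)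 * ((starRingEnd ℂ) (ψ 0))^2 * (Complex.I)^2 * ((((Real.sqrt 2)⁻¹ : ℝ) : ℂ))^2 + (2 : ℂ) * (ψ 0) * (ψ 1) * ((starRingEnd ℂ) (ψ 0))^2 * (Complex.I)^2 * ((((Real.sqrt 2)⁻¹ : ℝ) : ℂ))^4 + (1/2 : ℂ) * (ψ 0)^2 * ((starRingEnd ℂ) (ψ 0)) * ((starRingEnd ℂ) (ψ 1)) + (1 : ℂ) * (ψ 0)^2 * ((starRingEnd ℂ) (ψ 0)) * ((starRingEnd ℂ) (ψ 1)) * ((((Real.sqrt 2)⁻¹ : ℝ) : ℂ))^2 + (2 : ℂ) * (ψ 0)^2 * ((starRingEnd ℂ) (ψ 0)) * ((starRingEnd ℂ) (ψ 1)) * ((((Real.sqrt 2)⁻¹ : ℝ) : ℂ))^4 + (-1/2 : ℂ) * (ψ 0)^2 * ((starRingEnd ℂ) (ψ 0)) * ((starRingEnd ℂ) (ψ 1)) * (Complex.I)^2 + (-1 : ℂ) * (ψ 0)^2 * ((starRingEnd ℂ) (ψ 0)) * ((starRingEnd ℂ) (ψ 1)) * (Complex.I)^2 * ((((Real.sqrt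 2)⁻¹ : ℝ) : ℂ))^2 + (-2 : ℂ) * (ψ 0)^2 * ((starRingEnd ℂ) (ψ 0)) * ((starRingEnd ℂ) (ψ 1)) * (Complex.I)^2 * ((((Real.sqrt 2)⁻¹ : ℝ) : ℂ))^4) * hc
    · linear_combination ((1/2 : ℂ) * (ψ 1) * ((starRingEnd ℂ) (ψ 0))) * hψ' + ((-1/4 : ℂ) * (ψ 1)^2 * ((starRingEnd ℂ) (ψ 0)) * ((starRingEnd ℂ) (ψ 1)) + (1/4 : ℂ) * (ψ 1)^2 * ((starRingEnd ℂ) (ψ 0)) * ((starRingEnd ℂ) (ψ 1)) * (Complex.I)^2 + (1/4 : ℂ) * (ψ 0) * (ψ 1) * ((starRingEnd ℂ) (ψ 1))^2 + (-1/4 : ℂ) * (ψ 0) * (ψ 1) * ((starRingEnd ℂ) (ψ 1))^2 * (Complex.I)^2 + (-1/4 : ℂ) * (ψ 0) * (ψ 1) * ((starRingEnd ℂ) (ψ 0))^2 + (1/4 : ℂ) * (ψ 0)^2 * ((starRingEnd ℂ) (ψ 0)) * ((starRingEnd ℂ) (ψ 1))) * Complex.I_sq + ((1/2 : ℂ) *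 (ψ 1)^2 * ((starRingEnd ℂ) (ψ 0)) * ((starRingEnd ℂ) (ψ 1)) + (1 : ℂ) * (ψ 1)^2 * ((starRingEnd ℂ) (ψ 0)) * ((starRingEnd ℂ) (ψ 1)) * ((((Real.sqrt 2)⁻¹ : ℝ) : ℂ))^2 + (2 : ℂ) * (ψ 1)^2 * ((starRingEnd ℂ) (ψ 0)) * ((starRingEnd ℂ) (ψ 1)) * ((((Real.sqrt 2)⁻¹ : ℝ) : ℂ))^4 + (1/2 : ℂ) * (ψ 1)^2 * ((starRingEnd ℂ) (ψ 0)) * ((starRingEnd ℂ) (ψ 1)) * (Complex.I)^4 + (1 : ℂ) * (ψ 1)^2 * ((starRingEnd ℂ) (ψ 0)) * ((starRingEnd ℂ) (ψ 1)) * (Complex.I)^4 * ((((Real.sqrt 2)⁻¹ : ℝ) : ℂ))^2 + (2 : ℂ) * (ψ 1)^2 * ((starRingEnd ℂ) (ψ 0)) * ((starRingEnd ℂ) (ψ 1)) * (Complex.I)^4 * ((((Real.sqrt 2)⁻¹ : ℝ) : ℂ))^4 + (1/2 : ℂ) * (ψ 0) * (ψ 1) * ((starRingEnd ℂ) (ψ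 1))^2 + (1 : ℂ) * (ψ 0) * (ψ 1) * ((starRingEnd ℂ) (ψ 1))^2 * ((((Real.sqrt 2)⁻¹ : ℝ) : ℂ))^2 + (2 : ℂ) * (ψ 0) * (ψ 1) * ((starRingEnd ℂ) (ψ 1))^2 * ((((Real.sqrt 2)⁻¹ : ℝ) : ℂ))^4 + (-1/2 : ℂ) * (ψ 0) * (ψ 1) * ((starRingEnd ℂ) (ψ 1))^2 * (Complex.I)^4 + (-1 : ℂ) * (ψ 0) * (ψ 1) * ((starRingEnd ℂ) (ψ 1))^2 * (Complex.I)^4 * ((((Real.sqrt 2)⁻¹ : ℝ) : ℂ))^2 + (-2 : ℂ) * (ψ 0) * (ψ 1) * ((starRingEnd ℂ) (ψ 1))^2 * (Complex.I)^4 * ((((Real.sqrt 2)⁻¹ : ℝ) : ℂ))^4 + (1/2 : ℂ) * (ψ 0) * (ψ 1) * ((starRingEnd ℂ) (ψ 0))^2 + (1 : ℂ) * (ψ 0) * (ψ 1) * ((starRingEnd ℂ) (ψ 0))^2 * ((((Real.sqrt 2)⁻¹ : ℝ) : ℂ))^2 + (2 : ℂ) * (ψ 0) * (ψ 1) * ((starRingEnd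 ℂ) (ψ 0))^2 * ((((Real.sqrt 2)⁻¹ : ℝ) : ℂ))^4 + (-1/2 : ℂ) * (ψ 0) * (ψ 1) * ((starRingEnd ℂ) (ψ 0))^2 * (Complex.I)^2 + (-1 : ℂ) * (ψ 0) * (ψ 1) * ((starRingEnd ℂ) (ψ 0))^2 * (Complex.I)^2 * ((((Real.sqrt 2)⁻¹ : ℝ) : ℂ))^2 + (-2 : ℂ) * (ψ 0) * (ψ 1) * ((starRingEnd ℂ) (ψ 0))^2 * (Complex.I)^2 * ((((Real.sqrt 2)⁻¹ : ℝ) : ℂ))^4 + (1/2 : ℂ) * (ψ 0)^2 * ((starRingEnd ℂ) (ψ 0)) * ((starRingEnd ℂ) (ψ 1)) + (1 : ℂ) * (ψ 0)^2 * ((starRingEnd ℂ) (ψ 0)) * ((starRingEnd ℂ) (ψ 1)) * ((((Real.sqrt 2)⁻¹ : ℝ) : ℂ))^2 + (2 : ℂ) * (ψ 0)^2 * ((starRingEnd ℂ) (ψ 0)) * ((starRingEnd ℂ) (ψ 1)) * ((((Real.sqrt 2)⁻¹ : ℝ) : ℂ))^4 + (1/2 : ℂ) * (ψ 0)^2 *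 ((starRingEnd ℂ) (ψ 0)) * ((starRingEnd ℂ) (ψ 1)) * (Complex.I)^2 + (1 : ℂ) * (ψ 0)^2 * ((starRingEnd ℂ) (ψ 0)) * ((starRingEnd ℂ) (ψ 1)) * (Complex.I)^2 * ((((Real.sqrt 2)⁻¹ : ℝ) : ℂ))^2 + (2 : ℂ) * (ψ 0)^2 * ((starRingEnd ℂ) (ψ 0)) * ((starRingEnd ℂ) (ψ 1)) * (Complex.I)^2 * ((((Real.sqrt 2)⁻¹ : ℝ) : ℂ))^4) * hc
    · linear_combination ((1/4 : ℂ) + (3/4 : ℂ) * (ψ 1) * ((starRingEnd ℂ) (ψ 1)) + (1/4 : ℂ) * (ψ 0) * ((starRingEnd ℂ) (ψ 0))) * hψ' + ((-1/8 : ℂ) * (ψ 1)^2 * ((starRingEnd ℂ) (ψ 1))^2 + (1/8 : ℂ) * (ψ 1)^2 * ((starRingEnd ℂ) (ψ 1))^2 * (Complex.I)^2 + (-1/8 : ℂ) * (ψ 1)^2 * ((starRingEnd ℂ) (ψ 1))^2 * (Complex.I)^4 + (1/8 : ℂ) * (ψ 1)^2 * ((starRingEnd ℂ) (ψ 0))^2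 + (-1/8 : ℂ) * (ψ 1)^2 * ((starRingEnd ℂ) (ψ 0))^2 * (Complex.I)^2 + (-1/2 : ℂ) * (ψ 0) * (ψ 1) * ((starRingEnd ℂ) (ψ 0)) * ((starRingEnd ℂ) (ψ 1)) + (1/2 : ℂ) * (ψ 0) * (ψ 1) * ((starRingEnd ℂ) (ψ 0)) * ((starRingEnd ℂ) (ψ 1)) * (Complex.I)^2 + (1/8 : ℂ) * (ψ 0)^2 * ((starRingEnd ℂ) (ψ 1))^2 + (-1/8 : ℂ) * (ψ 0)^2 * ((starRingEnd ℂ) (ψ 1))^2 * (Complex.I)^2 + (-1/8 : ℂ) * (ψ 0)^2 * ((starRingEnd ℂ) (ψ 0))^2) * Complex.I_sq + ((1/4 : ℂ) * (ψ 1)^2 * ((starRingEnd ℂ) (ψ 1))^2 + (1/2 : ℂ) * (ψ 1)^2 * ((starRingEnd ℂ) (ψ 1))^2 * ((((Real.sqrt 2)⁻¹ : ℝ) : ℂ))^2 + (1 : ℂ) * (ψ 1)^2 * ((starRingEnd ℂ) (ψ 1))^2 * ((((Real.sqrt 2)⁻¹ : ℝ) : ℂ))^4 + (-1/4 : ℂ)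 * (ψ 1)^2 * ((starRingEnd ℂ) (ψ 1))^2 * (Complex.I)^6 + (-1/2 : ℂ) * (ψ 1)^2 * ((starRingEnd ℂ) (ψ 1))^2 * (Complex.I)^6 * ((((Real.sqrt 2)⁻¹ : ℝ) : ℂ))^2 + (-1 : ℂ) * (ψ 1)^2 * ((starRingEnd ℂ) (ψ 1))^2 * (Complex.I)^6 * ((((Real.sqrt 2)⁻¹ : ℝ) : ℂ))^4 + (1/4 : ℂ) * (ψ 1)^2 * ((starRingEnd ℂ) (ψ 0))^2 + (1/2 : ℂ) * (ψ 1)^2 * ((starRingEnd ℂ) (ψ 0))^2 * ((((Real.sqrt 2)⁻¹ : ℝ) : ℂ))^2 + (1 : ℂ) * (ψ 1)^2 * ((starRingEnd ℂ) (ψ 0))^2 * ((((Real.sqrt 2)⁻¹ : ℝ) : ℂ))^4 + (-1/4 : ℂ) * (ψ 1)^2 * ((starRingEnd ℂ) (ψ 0))^2 * (Complex.I)^4 + (-1/2 : ℂ) * (ψ 1)^2 * ((starRingEnd ℂ) (ψ 0))^2 * (Complex.I)^4 * ((((Real.sqrt 2)⁻¹ : ℝ) : ℂ))^2 + (-1 :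 ℂ) * (ψ 1)^2 * ((starRingEnd ℂ) (ψ 0))^2 * (Complex.I)^4 * ((((Real.sqrt 2)⁻¹ : ℝ) : ℂ))^4 + (1 : ℂ) * (ψ 0) * (ψ 1) * ((starRingEnd ℂ) (ψ 0)) * ((starRingEnd ℂ) (ψ 1)) + (2 : ℂ) * (ψ 0) * (ψ 1) * ((starRingEnd ℂ) (ψ 0)) * ((starRingEnd ℂ) (ψ 1)) * ((((Real.sqrt 2)⁻¹ : ℝ) : ℂ))^2 + (4 : ℂ) * (ψ 0) * (ψ 1) * ((starRingEnd ℂ) (ψ 0)) * ((starRingEnd ℂ) (ψ 1)) * ((((Real.sqrt 2)⁻¹ : ℝ) : ℂ))^4 + (1 : ℂ) * (ψ 0) * (ψ 1) * ((starRingEnd ℂ) (ψ 0)) * ((starRingEnd ℂ) (ψ 1)) * (Complex.I)^4 + (2 : ℂ) * (ψ 0) * (ψ 1) * ((starRingEnd ℂ) (ψ 0)) * ((starRingEnd ℂ) (ψ 1)) * (Complex.I)^4 * ((((Real.sqrt 2)⁻¹ : ℝ) : ℂ))^2 + (4 : ℂ) * (ψ 0) * (ψ 1) * ((starRingEnd ℂ)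 (ψ 0)) * ((starRingEnd ℂ) (ψ 1)) * (Complex.I)^4 * ((((Real.sqrt 2)⁻¹ : ℝ) : ℂ))^4 + (1/4 : ℂ) * (ψ 0)^2 * ((starRingEnd ℂ) (ψ 1))^2 + (1/2 : ℂ) * (ψ 0)^2 * ((starRingEnd ℂ) (ψ 1))^2 * ((((Real.sqrt 2)⁻¹ : ℝ) : ℂ))^2 + (1 : ℂ) * (ψ 0)^2 * ((starRingEnd ℂ) (ψ 1))^2 * ((((Real.sqrt 2)⁻¹ : ℝ) : ℂ))^4 + (-1/4 : ℂ) * (ψ 0)^2 * ((starRingEnd ℂ) (ψ 1))^2 * (Complex.I)^4 + (-1/2 : ℂ) * (ψ 0)^2 * ((starRingEnd ℂ) (ψ 1))^2 * (Complex.I)^4 * ((((Real.sqrt 2)⁻¹ : ℝ) : ℂ))^2 + (-1 : ℂ) * (ψ 0)^2 * ((starRingEnd ℂ) (ψ 1))^2 * (Complex.I)^4 * ((((Real.sqrt 2)⁻¹ : ℝ) : ℂ))^4 + (1/4 : ℂ) * (ψ 0)^2 * ((starRingEnd ℂ) (ψ 0))^2 + (1/2 : ℂ) * (ψ 0)^2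 * ((starRingEnd ℂ) (ψ 0))^2 * ((((Real.sqrt 2)⁻¹ : ℝ) : ℂ))^2 + (1 : ℂ) * (ψ 0)^2 * ((starRingEnd ℂ) (ψ 0))^2 * ((((Real.sqrt 2)⁻¹ : ℝ) : ℂ))^4 + (-1/4 : ℂ) * (ψ 0)^2 * ((starRingEnd ℂ) (ψ 0))^2 * (Complex.I)^2 + (-1/2 : ℂ) * (ψ 0)^2 * ((starRingEnd ℂ) (ψ 0))^2 * (Complex.I)^2 * ((((Real.sqrt 2)⁻¹ : ℝ) : ℂ))^2 + (-1 : ℂ) * (ψ 0)^2 * ((starRingEnd ℂ) (ψ 0))^2 * (Complex.I)^2 * ((((Real.sqrt 2)⁻¹ : ℝ) : ℂ))^4) * hc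
  refine ⟨main, ?_⟩
  have e : ∀ a b : Fin 2, (∑ α : Fin 6, (6 : ℂ)⁻¹ *
          Matrix.trace (projOp (vecPow 2 (sixStates α)) * projOp (vecPow 2 ψ)) *
          3 * (sixStates α a * star (sixStates α b)))
      = ((2 : ℂ)⁻¹ • projOp ψ + (4 : ℂ)⁻¹ • (1 : Matrix (Fin 2) (Fin 2) ℂ)) a b := by
    intro a b
    exact congrFun (congrFun main a) b
  simp only [e]
  simp only [Fin.sum_univ_two, Matrix.add_apply, Matrix.smul_apply, projOp, Matrix.of_apply,
    Matrix.one_apply, smul_eq_mul, Complex.star_def, one_ne_zero, zero_ne_one, reduceCtorEq,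
    ite_true, ite_false, if_true, if_false]
  norm_num
  linear_combination ((1/2 : ℂ) * (ψ 0 * (starRingEnd ℂ) (ψ 0) + ψ 1 * (starRingEnd ℂ) (ψ 1)) + (3/4 : ℂ)) * hψ'
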